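/- Let J₁ ∈ SU(3) be the cyclic permutation matrix with (J₁)₂₁ = (J₁)₃₂ = (J₁)₁₃ = 1 and all other entries 0. For diagonal matrices D, D' ∈ SU(3), the equality D·J₁·D⁻¹·J₁⁻¹ = D'·J₁·D'⁻¹·J₁⁻¹ holds if and only if D' = ω·D for some ω ∈ ℂ with ω³ = 1. In particular, the map sending a diagonal matrix D ∈ SU(3) to the commutator D·J₁·D⁻¹·J₁⁻¹ is exactly three-to-one on the diagonal subgroup of SU(3). -/
import Mathlib


open Matrix

/-- The cyclic permutation matrix `J₁ ∈ SU(3)`, sending `e₁ ↦ e₂ ↦ e₃ ↦ e₁`. -/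
noncomputable def Jone : Matrix (Fin 3) (Fin 3) ℂ := !![0, 0, 1; 1, 0, 0; 0, 1, 0]

lemma Jone_inv : Jone⁻¹ = !![0,1,0;0,0,1;1,0,0] := by
  apply inv_eq_right_inv
  ext i j
  fin_cases i <;> fin_cases j <;>
    simp [Jone, Matrix.mul_apply, Fin.sum_univ_three, Matrix.vecHead, Matrix.vecTail]

lemma diag_inv (v : Fin 3 → ℂ) (h : ∀ i, v i ≠ 0) :
    (diagonal v)⁻¹ = diagonal (fun i => (v i)⁻¹) := by
  apply inv_eq_right_inv
  rw [diagonal_mul_diagonal]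
  ext i j
  simp only [diagonal, one_apply, of_apply]
  split_ifs with hij
  · exact mul_inv_cancel₀ (h i)
  · rfl

lemma comm_eq (v : Fin 3 → ℂ) (h : ∀ i, v i ≠ 0) :
    diagonal v * Jone * (diagonal v)⁻¹ * Jone⁻¹ =
      diagonal ![v 0 / v 2, v 1 / v 0, v 2 / v 1] := by
  rw [diag_inv v h, Jone_inv]
  ext i j
  fin_cases i <;> fin_cases j <;>
    simp [Jone, Matrix.mul_apply, Fin.sum_univ_three, diagonal, div_eq_mul_inv,
      Matrix.vecHead, Matrix.vecTail]

/-- For diagonal matrices `D, D' ∈ SU(3)`, the commutators with the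
cyclic permutation matrix `J₁` agree, `D·J₁·D⁻¹·J₁⁻¹ = D'·J₁·D'⁻¹·J₁⁻¹`, if and only if
`D' = ω·D` for some cube root of unity `ω`. -/
theorem stmt13 (D D' : Matrix (Fin 3) (Fin 3) ℂ)
    (hDdiag : D.IsDiag) (hDu : Dᴴ * D = 1) (hDd : D.det = 1)
    (hD'diag : D'.IsDiag) (hD'u : D'ᴴ * D' = 1) (hD'd : D'.det = 1) :
    D * Jone * D⁻¹ * Jone⁻¹ = D' * Jone * D'⁻¹ * Jone⁻¹ ↔
      ∃ ω : ℂ, ω ^ 3 = 1 ∧ D' = ω • D := by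
  have hD : diagonal D.diag = D := hDdiag.diagonal_diag
  have hD' : diagonal D'.diag = D' := hD'diag.diagonal_diag
  set v := D.diag with hv
  set w := D'.diag with hw
  have hdet : v 0 * v 1 * v 2 = 1 := by
    rw [← hDd, ← hD, det_diagonal, Fin.prod_univ_three]
  have hdet' : w 0 * w 1 * w 2 = 1 := by
    rw [← hD'd, ← hD', det_diagonal, Fin.prod_univ_three]
  have hv0 : v 0 ≠ 0 := fun h => by rw [h] at hdet; simp at hdet
  have hv1 : v 1 ≠ 0 := fun h => by rw [h] at hdet; simp at hdet
  have hv2 : v 2 ≠ 0 := fun h => by rw [h] at hdet; simp at hdet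
  have hw0 : w 0 ≠ 0 := fun h => by rw [h] at hdet'; simp at hdet'
  have hw1 : w 1 ≠ 0 := fun h => by rw [h] at hdet'; simp at hdet'
  have hw2 : w 2 ≠ 0 := fun h => by rw [h] at hdet'; simp at hdet'
  have hvne : ∀ i, v i ≠ 0 := by intro i; fin_cases i <;> assumption
  have hwne : ∀ i, w i ≠ 0 := by intro i; fin_cases i <;> assumption
  rw [← hD, ← hD', comm_eq v hvne, comm_eq w hwne, diagonal_eq_diagonal_iff]
  constructor
  · intro h
    have h0 := h 0
    have h1 := h 1
    have h2 := h 2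
    simp only [Matrix.cons_val_zero, Matrix.cons_val_one, Matrix.head_cons,
      Matrix.cons_val_two, Matrix.tail_cons] at h0 h1 h2
    rw [div_eq_div_iff hv2 hw2] at h0
    rw [div_eq_div_iff hv0 hw0] at h1
    rw [div_eq_div_iff hv1 hw1] at h2
    have key : w 0 ^ 3 * (v 0 * v 1 * v 2) = v 0 ^ 3 * (w 0 * w 1 * w 2) := by
      linear_combination (w 0 ^ 2 * v 0 * v 2) * h1 - (v 0 ^ 2 * w 0 * w 1) * h0
    refine ⟨w 0 / v 0, ?_, ?_⟩
    · rw [div_pow, div_eq_one_iff_eq (pow_ne_zero _ hv0)]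
      linear_combination key - w 0 ^ 3 * hdet + v 0 ^ 3 * hdet'
    · rw [← diagonal_smul, diagonal_eq_diagonal_iff]
      intro i
      fin_cases i <;> simp only [Pi.smul_apply, smul_eq_mul]
      · show w 0 = w 0 / v 0 * v 0
        field_simp
      · show w 1 = w 0 / v 0 * v 1
        field_simp
        linear_combination -h1
      · show w 2 = w 0 / v 0 * v 2
        field_simp
        linear_combination h0
  · rintro ⟨ω, hω3, hsm⟩
    have hωne : ω ≠ 0 := by
      intro h; rw [h] at hω3; simp at hω3
    rw [← diagonal_smul, diagonal_eq_diagonal_iff] at hsm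
    intro i
    fin_cases i <;>
      simp only [Matrix.cons_val_zero, Matrix.cons_val_one, Matrix.head_cons,
        Matrix.cons_val_two, Matrix.tail_cons, hsm, Pi.smul_apply, smul_eq_mul,
        mul_div_mul_left _ _ hωne]
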